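/- arXiv:2103.09010 — 3 statements merged into one kernel-verified Lean document; each statement's English description precedes it below -/
import Mathlib

section
/- Corollary to Thirring's inequality (Corollary 3.5, quadratic form version): Let A be a bounded self-adjoint operator on a complex Hilbert space H, let ψ ∈ H with ‖ψ‖ = 1 and A ψ = E₁ ψ for some E₁ ∈ ℝ, and let E₂ ∈ ℝ be such that re⟨φ, A φ⟩ ≥ E₂ ‖φ‖² for every φ ∈ H with ⟨ψ, φ⟩ = 0. Let V be a bounded self-adjoint operator on H which is positive and invertible with bounded inverse V⁻¹. Then for every φ ∈ H with ‖φ‖ = 1, re⟨φ, (A + V) φ⟩ ≥ min(E₁ + (re⟨ψ, V⁻¹ ψ⟩)⁻¹, E₂). -/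
/-!
Split a unit vector as `φ = a • ψ + χ` with `a = ⟪ψ, φ⟫` and `χ ⊥ ψ`, so `‖a‖² + ‖χ‖² = 1`.
Since `ψ` is an eigenvector of the self-adjoint `A`, the cross terms vanish and
`re⟪φ, A φ⟫ ≥ E₁ ‖a‖² + E₂ ‖χ‖²`. Cauchy–Schwarz for the positive form `(x, y) ↦ ⟪x, V y⟫`,
applied to `W ψ` and `φ`, gives `‖a‖² = ‖⟪W ψ, V φ⟫‖² ≤ re⟪ψ, W ψ⟫ · re⟪φ, V φ⟫`.
Hence `re⟪φ, (A + V) φ⟫` dominates the convex combination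
`‖a‖² (E₁ + re⟪ψ, W ψ⟫⁻¹) + ‖χ‖² E₂`, which is at least the minimum.
-/

open scoped InnerProductSpace

open RCLike

section

variable {𝕜 E : Type*} [RCLike 𝕜] [NormedAddCommGroup E] [InnerProductSpace 𝕜 E]

theorem ContinuousLinearMap.IsPositive.norm_inner_map_sq_le {T : E →L[𝕜] E}
    (hT : T.IsPositive) (x y : E) :
    ‖⟪x, T y⟫_𝕜‖ ^ 2 ≤ re ⟪x, T x⟫_𝕜 * re ⟪y, T y⟫_𝕜 := by
  let form : PreInnerProductSpace.Core 𝕜 E :=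
    { inner := fun a b => ⟪a, T b⟫_𝕜
      conj_inner_symm := fun a b => by
        simp only [inner_conj_symm, hT.inner_left_eq_inner_right]
      re_inner_nonneg := hT.re_inner_nonneg_right
      add_left := fun a b c => inner_add_left a b (T c)
      smul_left := fun a b r => inner_smul_left a (T b) r }
  have hcs : ‖⟪x, T y⟫_𝕜‖ * ‖⟪y, T x⟫_𝕜‖ ≤ re ⟪x, T x⟫_𝕜 * re ⟪y, T y⟫_𝕜 :=
    InnerProductSpace.Core.inner_mul_inner_self_le (c := form) x y
  rwa [← hT.inner_left_eq_inner_right y, norm_inner_symm (T y) x, ← sq] at hcs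

theorem ContinuousLinearMap.IsPositive.norm_inner_sq_le_of_apply_eq {T : E →L[𝕜] E}
    (hT : T.IsPositive) {u ψ : E} (hu : T u = ψ) (φ : E) :
    ‖⟪ψ, φ⟫_𝕜‖ ^ 2 ≤ re ⟪ψ, u⟫_𝕜 * re ⟪φ, T φ⟫_𝕜 := by
  have hcs := hT.norm_inner_map_sq_le u φ
  rwa [← hT.inner_left_eq_inner_right, hu, inner_re_symm u ψ] at hcs

theorem re_inner_add_map_add_of_eigenvector {A : E →ₗ[𝕜] E} (hA : A.IsSymmetric)
    {x χ : E} {μ : ℝ} (hx : A x = (μ : 𝕜) • x) (hχ : ⟪x, χ⟫_𝕜 = 0) :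
    re ⟪x + χ, A (x + χ)⟫_𝕜 = μ * ‖x‖ ^ 2 + re ⟪χ, A χ⟫_𝕜 := by
  have hχx : ⟪χ, x⟫_𝕜 = 0 := inner_eq_zero_symm.mp hχ
  have hcross : ⟪x, A χ⟫_𝕜 = 0 := by rw [← hA, hx, inner_smul_left, hχ, mul_zero]
  rw [map_add, inner_add_left, inner_add_right, inner_add_right, hx, inner_smul_right,
    inner_smul_right, hχx, hcross, inner_self_eq_norm_sq_to_K]
  simp only [mul_zero, add_zero, zero_add, map_add, re_ofReal_mul]
  norm_cast

theorem inner_sub_inner_smul_eq_zero_of_norm_eq_one {ψ : E} (hψ : ‖ψ‖ = 1) (φ : E) :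
    ⟪ψ, φ - ⟪ψ, φ⟫_𝕜 • ψ⟫_𝕜 = 0 := by
  rw [inner_sub_right, inner_smul_right, inner_self_eq_norm_sq_to_K, hψ]
  simp

theorem norm_inner_sq_add_norm_sub_inner_smul_sq_of_norm_eq_one {ψ : E} (hψ : ‖ψ‖ = 1)
    (φ : E) : ‖⟪ψ, φ⟫_𝕜‖ ^ 2 + ‖φ - ⟪ψ, φ⟫_𝕜 • ψ‖ ^ 2 = ‖φ‖ ^ 2 := by
  have horth : ⟪⟪ψ, φ⟫_𝕜 • ψ, φ - ⟪ψ, φ⟫_𝕜 • ψ⟫_𝕜 = 0 := by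
    rw [inner_smul_left, inner_sub_inner_smul_eq_zero_of_norm_eq_one hψ, mul_zero]
  have hpyth := norm_add_sq_eq_norm_sq_add_norm_sq_of_inner_eq_zero _ _ horth
  rw [add_sub_cancel, norm_smul, hψ, mul_one] at hpyth
  simpa only [sq] using hpyth.symm

end

theorem thirring_corollary_general
    {H : Type*} [NormedAddCommGroup H] [InnerProductSpace ℂ H] [CompleteSpace H]
    (A : H →L[ℂ] H) (hA : IsSelfAdjoint A)
    (ψ : H) (hψ : ‖ψ‖ = 1) (E₁ E₂ : ℝ)
    (hgs : A ψ = (E₁ : ℂ) • ψ)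
    (hE₂ : ∀ φ : H, ⟪ψ, φ⟫_ℂ = 0 → E₂ * ‖φ‖ ^ 2 ≤ (⟪φ, A φ⟫_ℂ).re)
    (V W : H →L[ℂ] H) (hV : IsSelfAdjoint V)
    (hpos : ∀ x : H, 0 ≤ (⟪x, V x⟫_ℂ).re)
    (hVW : V ∘L W = ContinuousLinearMap.id ℂ H)
    (φ : H) (hφ : ‖φ‖ = 1) :
    min (E₁ + ((⟪ψ, W ψ⟫_ℂ).re)⁻¹) E₂ ≤ (⟪φ, (A + V) φ⟫_ℂ).re := by
  have hVpos : V.IsPositive := ContinuousLinearMap.isPositive_def'.mpr ⟨hV, fun x => by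
    rw [ContinuousLinearMap.reApplyInnerSelf_apply, inner_re_symm]; exact hpos x⟩
  have hVWψ : V (W ψ) = ψ := by simpa using congr($hVW ψ)
  set a := ⟪ψ, φ⟫_ℂ
  set χ := φ - a • ψ
  have hχ : ⟪ψ, χ⟫_ℂ = 0 := inner_sub_inner_smul_eq_zero_of_norm_eq_one hψ φ
  have hnorm : ‖a‖ ^ 2 + ‖χ‖ ^ 2 = 1 := by
    rw [norm_inner_sq_add_norm_sub_inner_smul_sq_of_norm_eq_one hψ, hφ, one_pow]
  have hA_part : (⟪φ, A φ⟫_ℂ).re = E₁ * ‖a‖ ^ 2 + (⟪χ, A χ⟫_ℂ).re := by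
    have haψ : (A : H →ₗ[ℂ] H) (a • ψ) = (E₁ : ℂ) • a • ψ := by
      rw [ContinuousLinearMap.coe_coe, map_smul, hgs, smul_comm]
    have haχ : ⟪a • ψ, χ⟫_ℂ = 0 := by rw [inner_smul_left, hχ, mul_zero]
    simpa only [χ, add_sub_cancel, norm_smul, hψ, mul_one, re_to_complex,
      ContinuousLinearMap.coe_coe]
      using re_inner_add_map_add_of_eigenvector hA.isSymmetric haψ haχ
  set t := (⟪ψ, W ψ⟫_ℂ).re
  have ht : 0 ≤ t := by
    simpa only [hVWψ, inner_re_symm (W ψ), re_to_complex] using hVpos.re_inner_nonneg_right (W ψ)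
  have hV_part : ‖a‖ ^ 2 * t⁻¹ ≤ (⟪φ, V φ⟫_ℂ).re :=
    mul_inv_le_of_le_mul₀ ht (hVpos.re_inner_nonneg_right φ)
      (by simpa only [mul_comm, re_to_complex] using hVpos.norm_inner_sq_le_of_apply_eq hVWψ φ)
  calc min (E₁ + t⁻¹) E₂ ≤ ‖a‖ ^ 2 * (E₁ + t⁻¹) + ‖χ‖ ^ 2 * E₂ :=
        Convex.min_le_combo _ _ (sq_nonneg _) (sq_nonneg _) hnorm
    _ ≤ (⟪φ, A φ⟫_ℂ).re + (⟪φ, V φ⟫_ℂ).re := by linarith [hE₂ χ hχ]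
    _ = (⟪φ, (A + V) φ⟫_ℂ).re := by rw [← Complex.add_re, ← inner_add_right]; rfl

/-- **Corollary to Thirring's inequality** (Corollary 3.5, quadratic form version).
Let `A` be a bounded self-adjoint operator, `ψ` a normalized eigenvector of `A`
with eigenvalue `E₁`, such that `re⟨φ, A φ⟩ ≥ E₂‖φ‖²` for every `φ ⊥ ψ`.
Let `V` be a bounded self-adjoint, positive operator which is invertible with
bounded inverse `W = V⁻¹`.  Then for every unit vector `φ`:
`re⟨φ, (A + V) φ⟩ ≥ min (E₁ + (re⟨ψ, V⁻¹ ψ⟩)⁻¹) E₂`. -/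
theorem thirring_corollary
    {H : Type*} [NormedAddCommGroup H] [InnerProductSpace ℂ H] [CompleteSpace H]
    (A : H →L[ℂ] H) (hA : IsSelfAdjoint A)
    (ψ : H) (hψ : ‖ψ‖ = 1) (E₁ E₂ : ℝ)
    (hgs : A ψ = (E₁ : ℂ) • ψ)
    (hE₂ : ∀ φ : H, ⟪ψ, φ⟫_ℂ = 0 → E₂ * ‖φ‖ ^ 2 ≤ (⟪φ, A φ⟫_ℂ).re)
    (V W : H →L[ℂ] H) (hV : IsSelfAdjoint V)
    (hpos : ∀ x : H, 0 ≤ (⟪x, V x⟫_ℂ).re)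
    (hVW : V ∘L W = ContinuousLinearMap.id ℂ H)
    (hWV : W ∘L V = ContinuousLinearMap.id ℂ H)
    (φ : H) (hφ : ‖φ‖ = 1) :
    min (E₁ + ((⟪ψ, W ψ⟫_ℂ).re)⁻¹) E₂ ≤ (⟪φ, (A + V) φ⟫_ℂ).re :=
  thirring_corollary_general A hA ψ hψ E₁ E₂ hgs hE₂ V W hV hpos hVW φ hφ
end

section
/- Ground state energy form identity (Lemma 5.3): Let d ≥ 1, let V : ℝ^d → ℝ be continuous, E₀ ∈ ℝ, and let Ψ : ℝ^d → ℝ be a twice continuously differentiable function satisfying the pointwise eigenvalue equation −ΔΨ(x) + V(x)Ψ(x) = E₀ Ψ(x) for all x ∈ ℝ^d. Let χ : ℝ^d → ℝ be smooth with compact support. Then ∫_{ℝ^d} (‖∇(χΨ)(x)‖² + (V(x) − E₀) χ(x)² Ψ(x)²) dx = ∫_{ℝ^d} Ψ(x)² ‖∇χ(x)‖² dx. -/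
open MeasureTheory

/-- The Laplacian of `f : ℝ^d → ℝ`, as the sum of the second partial
derivatives in the coordinate directions. -/
noncomputable def laplacian {d : ℕ} (f : EuclideanSpace ℝ (Fin d) → ℝ)
    (x : EuclideanSpace ℝ (Fin d)) : ℝ :=
  ∑ i : Fin d,
    fderiv ℝ (fun y => fderiv ℝ f y (EuclideanSpace.single i 1)) x
      (EuclideanSpace.single i 1)

/-- The squared norm of the gradient is the sum of squared partial derivatives. -/
lemma norm_gradient_sq_eq_sum {d : ℕ} (u : EuclideanSpace ℝ (Fin d) → ℝ)
    (x : EuclideanSpace ℝ (Fin d)) :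
    ‖gradient u x‖ ^ 2
      = ∑ i : Fin d, (fderiv ℝ u x (EuclideanSpace.single i 1)) ^ 2 := by
  have h : ∀ v : EuclideanSpace ℝ (Fin d),
      (inner ℝ (gradient u x) v : ℝ) = fderiv ℝ u x v := by
    intro v
    unfold gradient
    exact InnerProductSpace.toDual_symm_apply
  have hb := (EuclideanSpace.basisFun (Fin d) ℝ).sum_inner_mul_inner
    (gradient u x) (gradient u x)
  rw [real_inner_self_eq_norm_sq] at hb
  rw [← hb]
  refine Finset.sum_congr rfl fun i _ => ?_
  have h2 : (inner ℝ (EuclideanSpace.single i (1:ℝ)) (gradient u x) : ℝ)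
      = fderiv ℝ u x (EuclideanSpace.single i 1) := by
    rw [real_inner_comm]; exact h _
  rw [EuclideanSpace.basisFun_apply, h, h2, sq]

/-- **Ground state energy form identity** (Lemma 5.3).
If `Ψ` is a `C²` solution of `−ΔΨ + VΨ = E₀Ψ` on `ℝ^d` with `V` continuous,
then for every smooth compactly supported `χ`,
`∫ (‖∇(χΨ)‖² + (V − E₀) χ² Ψ²) = ∫ Ψ² ‖∇χ‖²`. -/
theorem ground_state_form_identity
    (d : ℕ) (hd : 1 ≤ d)
    (V : EuclideanSpace ℝ (Fin d) → ℝ) (hV : Continuous V) (E₀ : ℝ)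
    (Ψ : EuclideanSpace ℝ (Fin d) → ℝ) (hΨ : ContDiff ℝ 2 Ψ)
    (heig : ∀ x, -laplacian Ψ x + V x * Ψ x = E₀ * Ψ x)
    (χ : EuclideanSpace ℝ (Fin d) → ℝ) (hχ : ContDiff ℝ (⊤ : ℕ∞) χ)
    (hχc : HasCompactSupport χ) :
    ∫ x, (‖gradient (fun y => χ y * Ψ y) x‖ ^ 2
          + (V x - E₀) * (χ x) ^ 2 * (Ψ x) ^ 2)
      = ∫ x, (Ψ x) ^ 2 * ‖gradient χ x‖ ^ 2 := by
  classical
  have h12 : (1 : WithTop ℕ∞) ≤ 2 := one_le_two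
  have hχ2 : ContDiff ℝ 2 χ := hχ.of_le (WithTop.coe_le_coe.mpr le_top)
  have hχΨ : ContDiff ℝ 2 (fun y => χ y * Ψ y) := hχ2.mul hΨ
  -- the compactly supported function g = χ²Ψ (written as χ·(χ·Ψ))
  have hg : ContDiff ℝ 2 (fun y => χ y * (χ y * Ψ y)) := hχ2.mul hχΨ
  have hgc : HasCompactSupport (fun y => χ y * (χ y * Ψ y)) := hχc.mul_right
  -- the partial derivatives of Ψ are C¹
  have hw : ∀ i : Fin d,
      ContDiff ℝ 1 (fun y => fderiv ℝ Ψ y (EuclideanSpace.single i 1)) := by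
    intro i
    exact (hΨ.fderiv_right (m := 1) (by norm_num)).clm_apply contDiff_const
  -- integrability facts
  have I1 : ∀ i : Fin d, Integrable (fun x =>
      fderiv ℝ (fun y => χ y * (χ y * Ψ y)) x (EuclideanSpace.single i 1)
        * fderiv ℝ Ψ x (EuclideanSpace.single i 1)) := by
    intro i
    apply Continuous.integrable_of_hasCompactSupport
    · exact (((hg.fderiv_right (m := 1) (by norm_num)).clm_apply
        contDiff_const).continuous).mul (hw i).continuous
    · exact ((hgc.fderiv (𝕜 := ℝ)).comp_left
        (g := fun L : EuclideanSpace ℝ (Fin d) →L[ℝ] ℝ =>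
          L (EuclideanSpace.single i 1)) rfl).mul_right
  have I2 : ∀ i : Fin d, Integrable (fun x =>
      (χ x * (χ x * Ψ x))
        * fderiv ℝ (fun y => fderiv ℝ Ψ y (EuclideanSpace.single i 1)) x
            (EuclideanSpace.single i 1)) := by
    intro i
    apply Continuous.integrable_of_hasCompactSupport
    · exact hg.continuous.mul
        (((hw i).continuous_fderiv one_ne_zero).clm_apply continuous_const)
    · exact hgc.mul_right
  have I3 : ∀ i : Fin d, Integrable (fun x =>
      (χ x * (χ x * Ψ x)) * fderiv ℝ Ψ x (EuclideanSpace.single i 1)) := by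
    intro i
    apply Continuous.integrable_of_hasCompactSupport
    · exact hg.continuous.mul (hw i).continuous
    · exact hgc.mul_right
  -- integration by parts in direction i
  have hzero : ∀ i : Fin d, ∫ x,
      (fderiv ℝ (fun y => χ y * (χ y * Ψ y)) x (EuclideanSpace.single i 1)
          * fderiv ℝ Ψ x (EuclideanSpace.single i 1)
        + (χ x * (χ x * Ψ x))
          * fderiv ℝ (fun y => fderiv ℝ Ψ y (EuclideanSpace.single i 1)) x
              (EuclideanSpace.single i 1)) = 0 := by
    intro i
    have hIBP := integral_mul_fderiv_eq_neg_fderiv_mul_of_integrable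
      (f := fun y => χ y * (χ y * Ψ y))
      (g := fun y => fderiv ℝ Ψ y (EuclideanSpace.single i 1))
      (v := EuclideanSpace.single i 1)
      (I1 i) (I2 i) (I3 i) (fun x _ => (hg.differentiable two_ne_zero) x) (fun x _ => (hw i).differentiable one_ne_zero x)
    beta_reduce at hIBP
    rw [integral_add (I1 i) (I2 i), hIBP]
    ring
  -- integrability of the summed correction term
  have hFint : ∀ i : Fin d, Integrable (fun x =>
      fderiv ℝ (fun y => χ y * (χ y * Ψ y)) x (EuclideanSpace.single i 1)
          * fderiv ℝ Ψ x (EuclideanSpace.single i 1)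
        + (χ x * (χ x * Ψ x))
          * fderiv ℝ (fun y => fderiv ℝ Ψ y (EuclideanSpace.single i 1)) x
              (EuclideanSpace.single i 1)) := fun i => (I1 i).add (I2 i)
  -- integrability of the right-hand side integrand
  have hgradχ : Continuous (fun x => gradient χ x) := by
    have : Continuous (fun x => fderiv ℝ χ x) := hχ.continuous_fderiv (by simp)
    exact (InnerProductSpace.toDual ℝ
      (EuclideanSpace ℝ (Fin d))).symm.continuous.comp this
  have hRint : Integrable (fun x => (Ψ x) ^ 2 * ‖gradient χ x‖ ^ 2) := by
    apply Continuous.integrable_of_hasCompactSupport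
    · exact ((hΨ.continuous).pow 2).mul ((hgradχ.norm).pow 2)
    · have h0 : HasCompactSupport (fun x => ‖gradient χ x‖ ^ 2) := by
        refine (hχc.fderiv (𝕜 := ℝ)).comp_left
          (g := fun L : EuclideanSpace ℝ (Fin d) →L[ℝ] ℝ =>
            ‖(InnerProductSpace.toDual ℝ (EuclideanSpace ℝ (Fin d))).symm L‖ ^ 2) ?_
        simp
      exact h0.mul_left
  -- key pointwise identity
  have key : ∀ x, ‖gradient (fun y => χ y * Ψ y) x‖ ^ 2
        + (V x - E₀) * (χ x) ^ 2 * (Ψ x) ^ 2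
      = (Ψ x) ^ 2 * ‖gradient χ x‖ ^ 2
        + ∑ i : Fin d,
          (fderiv ℝ (fun y => χ y * (χ y * Ψ y)) x (EuclideanSpace.single i 1)
              * fderiv ℝ Ψ x (EuclideanSpace.single i 1)
            + (χ x * (χ x * Ψ x))
              * fderiv ℝ (fun y => fderiv ℝ Ψ y (EuclideanSpace.single i 1)) x
                  (EuclideanSpace.single i 1)) := by
    intro x
    have hlap : V x * Ψ x - E₀ * Ψ x = laplacian Ψ x := by
      have := heig x; linarith
    have hDχΨ : ∀ i : Fin d, fderiv ℝ (fun y => χ y * Ψ y) x (EuclideanSpace.single i 1)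
        = χ x * fderiv ℝ Ψ x (EuclideanSpace.single i 1)
          + Ψ x * fderiv ℝ χ x (EuclideanSpace.single i 1) := by
      intro i
      rw [fderiv_fun_mul ((hχ.differentiable (by simp)) x) ((hΨ.differentiable two_ne_zero) x)]
      simp [smul_eq_mul]
    have hDg : ∀ i : Fin d,
        fderiv ℝ (fun y => χ y * (χ y * Ψ y)) x (EuclideanSpace.single i 1)
        = χ x * fderiv ℝ (fun y => χ y * Ψ y) x (EuclideanSpace.single i 1)
          + (χ x * Ψ x) * fderiv ℝ χ x (EuclideanSpace.single i 1) := by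
      intro i
      rw [fderiv_fun_mul ((hχ.differentiable (by simp)) x) ((hχΨ.differentiable two_ne_zero) x)]
      simp [smul_eq_mul]
    have h1 : (V x - E₀) * (χ x) ^ 2 * (Ψ x) ^ 2
        = χ x * (χ x * Ψ x) * (V x * Ψ x - E₀ * Ψ x) := by ring
    rw [norm_gradient_sq_eq_sum, norm_gradient_sq_eq_sum, h1, hlap]
    have hL : laplacian Ψ x = ∑ i : Fin d,
        fderiv ℝ (fun y => fderiv ℝ Ψ y (EuclideanSpace.single i 1)) x
          (EuclideanSpace.single i 1) := rfl
    rw [hL, Finset.mul_sum, Finset.mul_sum, ← Finset.sum_add_distrib,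
      ← Finset.sum_add_distrib]
    refine Finset.sum_congr rfl fun i _ => ?_
    simp only [hDg i, hDχΨ i]
    ring
  calc ∫ x, (‖gradient (fun y => χ y * Ψ y) x‖ ^ 2
          + (V x - E₀) * (χ x) ^ 2 * (Ψ x) ^ 2)
      = ∫ x, ((Ψ x) ^ 2 * ‖gradient χ x‖ ^ 2
        + ∑ i : Fin d,
          (fderiv ℝ (fun y => χ y * (χ y * Ψ y)) x (EuclideanSpace.single i 1)
              * fderiv ℝ Ψ x (EuclideanSpace.single i 1)
            + (χ x * (χ x * Ψ x))
              * fderiv ℝ (fun y => fderiv ℝ Ψ y (EuclideanSpace.single i 1)) x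
                  (EuclideanSpace.single i 1))) := by
        exact congrArg _ (funext key)
    _ = (∫ x, (Ψ x) ^ 2 * ‖gradient χ x‖ ^ 2)
        + ∫ x, ∑ i : Fin d,
          (fderiv ℝ (fun y => χ y * (χ y * Ψ y)) x (EuclideanSpace.single i 1)
              * fderiv ℝ Ψ x (EuclideanSpace.single i 1)
            + (χ x * (χ x * Ψ x))
              * fderiv ℝ (fun y => fderiv ℝ Ψ y (EuclideanSpace.single i 1)) x
                  (EuclideanSpace.single i 1)) := by
        exact integral_add hRint (integrable_finset_sum _ fun i _ => hFint i)
    _ = ∫ x, (Ψ x) ^ 2 * ‖gradient χ x‖ ^ 2 := by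
        rw [integral_finset_sum _ fun i _ => hFint i]
        rw [Finset.sum_eq_zero fun i _ => hzero i, add_zero]
end

section
/- Approximate eigenfunction estimate (Lemma 3.2): Let d ≥ 1, let V : ℝ^d → ℝ be continuous, E₀ ∈ ℝ, and let Ψ : ℝ^d → ℝ be twice continuously differentiable with −ΔΨ + VΨ = E₀Ψ pointwise on ℝ^d, such that there are constants 0 < Ψ₋ ≤ Ψ₊ and G ≥ 0 with Ψ₋ ≤ Ψ(x) ≤ Ψ₊ and ‖∇Ψ(x)‖ ≤ G for all x. Let χ : ℝ^d → ℝ be smooth with values in [0, 1], χ = 1 on [−1/2, 1/2]^d, and support contained in (−1, 1)^d, and for L ≥ 1 set χ_L(y) := χ(y/L). Then there exists a constant C ≥ 0, depending only on d, Ψ₋, Ψ₊, G, and χ, such that for every real L ≥ 1: ‖−Δ(χ_L Ψ) + (V − E₀) χ_L Ψ‖_{L²(ℝ^d)} ≤ C L^{−1} ‖χ_L Ψ‖_{L²(ℝ^d)}. (The key pointwise identity is −Δ(χ_L Ψ) + (V − E₀) χ_L Ψ = −(2 ⟨∇Ψ, ∇χ_L⟩ + Ψ Δχ_L).) -/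
open MeasureTheory

namespace AEEaux

variable {d : ℕ}

lemma contDiff_pd {f : EuclideanSpace ℝ (Fin d) → ℝ} (hf : ContDiff ℝ 2 f)
    (v : EuclideanSpace ℝ (Fin d)) :
    ContDiff ℝ 1 (fun y => fderiv ℝ f y v) :=
  (hf.fderiv_right (by norm_num)).clm_apply contDiff_const

lemma pd2_mul {f g : EuclideanSpace ℝ (Fin d) → ℝ} (hf : ContDiff ℝ 2 f) (hg : ContDiff ℝ 2 g)
    (v x : EuclideanSpace ℝ (Fin d)) :
    fderiv ℝ (fun y => fderiv ℝ (fun z => f z * g z) y v) x v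
      = fderiv ℝ (fun y => fderiv ℝ f y v) x v * g x
        + 2 * (fderiv ℝ f x v * fderiv ℝ g x v)
        + f x * fderiv ℝ (fun y => fderiv ℝ g y v) x v := by
  have hfd : Differentiable ℝ f := hf.differentiable two_ne_zero
  have hgd : Differentiable ℝ g := hg.differentiable two_ne_zero
  have hDf : Differentiable ℝ (fun y => fderiv ℝ f y v) :=
    (contDiff_pd hf v).differentiable one_ne_zero
  have hDg : Differentiable ℝ (fun y => fderiv ℝ g y v) :=
    (contDiff_pd hg v).differentiable one_ne_zero
  have h1 : (fun y => fderiv ℝ (fun z => f z * g z) y v)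
      = fun y => f y * fderiv ℝ g y v + g y * fderiv ℝ f y v := by
    funext y
    rw [fderiv_fun_mul (hfd y) (hgd y)]
    simp
  rw [h1, fderiv_fun_add (f := fun y => f y * fderiv ℝ g y v)
    (g := fun y => g y * fderiv ℝ f y v) ((hfd x).mul (hDg x)) ((hgd x).mul (hDf x)),
    fderiv_fun_mul (hfd x) (hDg x), fderiv_fun_mul (hgd x) (hDf x)]
  simp only [ContinuousLinearMap.add_apply, ContinuousLinearMap.smul_apply, smul_eq_mul]
  ring

lemma fderiv_comp_smul {χ : EuclideanSpace ℝ (Fin d) → ℝ} (hχ : Differentiable ℝ χ)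
    (c : ℝ) (x v : EuclideanSpace ℝ (Fin d)) :
    fderiv ℝ (fun y => χ (c • y)) x v = c * fderiv ℝ χ (c • x) v := by
  have hA : HasFDerivAt (fun y : EuclideanSpace ℝ (Fin d) => c • y)
      (c • ContinuousLinearMap.id ℝ (EuclideanSpace ℝ (Fin d))) x :=
    (hasFDerivAt_id x).const_smul c
  have h := ((hχ (c • x)).hasFDerivAt.comp x hA).fderiv
  rw [show (fun y : EuclideanSpace ℝ (Fin d) => χ (c • y)) = χ ∘ (fun y => c • y) from rfl, h]
  simp [_root_.map_smul]

lemma pd2_comp_smul {χ : EuclideanSpace ℝ (Fin d) → ℝ} (hχ : ContDiff ℝ 2 χ)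
    (c : ℝ) (x v : EuclideanSpace ℝ (Fin d)) :
    fderiv ℝ (fun y => fderiv ℝ (fun z => χ (c • z)) y v) x v
      = c ^ 2 * fderiv ℝ (fun y => fderiv ℝ χ y v) (c • x) v := by
  have hχd : Differentiable ℝ χ := hχ.differentiable two_ne_zero
  have hD : Differentiable ℝ (fun z => fderiv ℝ χ z v) :=
    (contDiff_pd hχ v).differentiable one_ne_zero
  have h1 : (fun y => fderiv ℝ (fun z => χ (c • z)) y v)
      = fun y => c * (fun z => fderiv ℝ χ z v) (c • y) :=
    funext fun y => fderiv_comp_smul hχd c y v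
  have hDc : DifferentiableAt ℝ (fun y : EuclideanSpace ℝ (Fin d) =>
      (fun z => fderiv ℝ χ z v) (c • y)) x :=
    (hD (c • x)).comp x ((differentiable_id.const_smul c) x)
  rw [h1, fderiv_const_mul hDc c]
  simp only [ContinuousLinearMap.smul_apply, smul_eq_mul]
  rw [fderiv_comp_smul hD c x v]
  ring

lemma isClosed_box (r : ℝ) :
    IsClosed {x : EuclideanSpace ℝ (Fin d) | ∀ i, |x i| ≤ r} := by
  have : {x : EuclideanSpace ℝ (Fin d) | ∀ i, |x i| ≤ r}
      = ⋂ i, {x : EuclideanSpace ℝ (Fin d) | |x i| ≤ r} := by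
    ext x; simp
  rw [this]
  exact isClosed_iInter fun i =>
    (isClosed_le (continuous_abs.comp (EuclideanSpace.proj i).continuous) continuous_const)

lemma isCompact_box (r : ℝ) :
    IsCompact {x : EuclideanSpace ℝ (Fin d) | ∀ i, |x i| ≤ r} := by
  refine Metric.isCompact_of_isClosed_isBounded (isClosed_box r) ?_
  rw [Metric.isBounded_iff_subset_closedBall 0]
  refine ⟨Real.sqrt (d * r ^ 2), fun x hx => ?_⟩
  simp only [Metric.mem_closedBall, dist_zero_right]
  rw [EuclideanSpace.norm_eq]
  apply Real.sqrt_le_sqrt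
  calc ∑ i, ‖x i‖ ^ 2 ≤ ∑ _i : Fin d, r ^ 2 := by
        refine Finset.sum_le_sum fun i _ => ?_
        rw [Real.norm_eq_abs]
        exact sq_le_sq' (by linarith [hx i, abs_nonneg (x i)]) (hx i)
    _ = d * r ^ 2 := by simp [Finset.sum_const, nsmul_eq_mul]

lemma volume_box (r : ℝ) :
    volume {x : EuclideanSpace ℝ (Fin d) | ∀ i, |x i| ≤ r} = ENNReal.ofReal (2 * r) ^ d := by
  have hmp := EuclideanSpace.volume_preserving_symm_measurableEquiv_toLp (Fin d)
  have hset : {x : EuclideanSpace ℝ (Fin d) | ∀ i, |x i| ≤ r}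
      = (MeasurableEquiv.toLp 2 (Fin d → ℝ)).symm ⁻¹'
          (Set.pi Set.univ fun _ => Set.Icc (-r) r) := by
    ext x
    simp [abs_le, Set.mem_pi, Pi.le_def, forall_and]
  rw [hset, MeasurePreserving.measure_preimage hmp
    (MeasurableSet.univ_pi fun _ => measurableSet_Icc).nullMeasurableSet,
    volume_pi_pi, Real.volume_Icc]
  simp [Finset.prod_const]
  congr 1
  ring_nf
  rw [ENNReal.ofReal_mul' (by norm_num), ENNReal.ofReal_ofNat]

/-- χ vanishes in a neighbourhood of any point with some coordinate of absolute value > 1. -/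
lemma eventually_zero {χ : EuclideanSpace ℝ (Fin d) → ℝ}
    (hχsupp : ∀ x : EuclideanSpace ℝ (Fin d), χ x ≠ 0 → ∀ i, |x i| < 1)
    {z : EuclideanSpace ℝ (Fin d)} (j : Fin d) (hz : 1 < |z j|) :
    χ =ᶠ[nhds z] 0 := by
  have hU : IsOpen {y : EuclideanSpace ℝ (Fin d) | 1 < |y j|} :=
    isOpen_lt continuous_const (continuous_abs.comp (EuclideanSpace.proj j).continuous)
  filter_upwards [hU.mem_nhds hz] with y hy
  by_contra h
  exact absurd (hχsupp y h j) (not_lt.2 (le_of_lt hy))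

lemma fderiv_zero_of_far {χ : EuclideanSpace ℝ (Fin d) → ℝ}
    (hχsupp : ∀ x : EuclideanSpace ℝ (Fin d), χ x ≠ 0 → ∀ i, |x i| < 1)
    {z : EuclideanSpace ℝ (Fin d)} (j : Fin d) (hz : 1 < |z j|) :
    fderiv ℝ χ z = 0 := by
  rw [(eventually_zero hχsupp j hz).fderiv_eq]
  exact fderiv_const_apply 0

lemma fderiv2_zero_of_far {χ : EuclideanSpace ℝ (Fin d) → ℝ}
    (hχsupp : ∀ x : EuclideanSpace ℝ (Fin d), χ x ≠ 0 → ∀ i, |x i| < 1)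
    {z : EuclideanSpace ℝ (Fin d)} (j : Fin d) (hz : 1 < |z j|)
    (v : EuclideanSpace ℝ (Fin d)) :
    fderiv ℝ (fun y => fderiv ℝ χ y v) z = 0 := by
  have hU : IsOpen {y : EuclideanSpace ℝ (Fin d) | 1 < |y j|} :=
    isOpen_lt continuous_const (continuous_abs.comp (EuclideanSpace.proj j).continuous)
  have hev : (fun y => fderiv ℝ χ y v) =ᶠ[nhds z] 0 := by
    filter_upwards [hU.mem_nhds hz] with y hy
    rw [Pi.zero_apply, fderiv_zero_of_far hχsupp j hy]
    rfl
  rw [hev.fderiv_eq]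
  exact fderiv_const_apply 0

lemma pd_le_grad {Ψ : EuclideanSpace ℝ (Fin d) → ℝ} (x v : EuclideanSpace ℝ (Fin d)) :
    |fderiv ℝ Ψ x v| ≤ ‖gradient Ψ x‖ * ‖v‖ := by
  have hnorm : ‖gradient Ψ x‖ = ‖fderiv ℝ Ψ x‖ := by
    rw [gradient]
    exact LinearIsometryEquiv.norm_map _ _
  rw [hnorm, ← Real.norm_eq_abs]
  exact (fderiv ℝ Ψ x).le_opNorm v

end AEEaux

namespace AEEaux

lemma key_identity {d : ℕ} {χ Ψ V : EuclideanSpace ℝ (Fin d) → ℝ} {E₀ : ℝ}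
    (hχ : ContDiff ℝ (⊤ : ℕ∞) χ) (hΨ : ContDiff ℝ 2 Ψ)
    (heig : ∀ x, -laplacian Ψ x + V x * Ψ x = E₀ * Ψ x) (c : ℝ)
    (x : EuclideanSpace ℝ (Fin d)) :
    -laplacian (fun y => χ (c • y) * Ψ y) x + (V x - E₀) * (χ (c • x) * Ψ x)
      = -((∑ i, c ^ 2 * fderiv ℝ (fun y => fderiv ℝ χ y (EuclideanSpace.single i 1)) (c • x)
              (EuclideanSpace.single i 1)) * Ψ x
          + 2 * ∑ i, (c * fderiv ℝ χ (c • x) (EuclideanSpace.single i 1))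
              * fderiv ℝ Ψ x (EuclideanSpace.single i 1)) := by
  have hχ2 : ContDiff ℝ 2 χ := hχ.of_le (WithTop.coe_le_coe.mpr le_top)
  have hχd : Differentiable ℝ χ := hχ2.differentiable two_ne_zero
  have hχL : ContDiff ℝ 2 (fun y : EuclideanSpace ℝ (Fin d) => χ (c • y)) :=
    hχ2.comp (contDiff_id.const_smul c)
  have hsum : ∀ i : Fin d,
      fderiv ℝ (fun y => fderiv ℝ (fun z => χ (c • z) * Ψ z) y (EuclideanSpace.single i 1)) x
          (EuclideanSpace.single i 1)
        = c ^ 2 * fderiv ℝ (fun y => fderiv ℝ χ y (EuclideanSpace.single i 1)) (c • x)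
              (EuclideanSpace.single i 1) * Ψ x
          + 2 * ((c * fderiv ℝ χ (c • x) (EuclideanSpace.single i 1))
              * fderiv ℝ Ψ x (EuclideanSpace.single i 1))
          + χ (c • x) * fderiv ℝ (fun y => fderiv ℝ Ψ y (EuclideanSpace.single i 1)) x
              (EuclideanSpace.single i 1) := by
    intro i
    have h := pd2_mul hχL hΨ (EuclideanSpace.single i 1) x
    rw [pd2_comp_smul hχ2 c x (EuclideanSpace.single i 1),
      fderiv_comp_smul hχd c x (EuclideanSpace.single i 1)] at h
    exact h
  have hlap : laplacian (fun y => χ (c • y) * Ψ y) x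
      = (∑ i, c ^ 2 * fderiv ℝ (fun y => fderiv ℝ χ y (EuclideanSpace.single i 1)) (c • x)
              (EuclideanSpace.single i 1)) * Ψ x
        + 2 * ∑ i, (c * fderiv ℝ χ (c • x) (EuclideanSpace.single i 1))
              * fderiv ℝ Ψ x (EuclideanSpace.single i 1)
        + χ (c • x) * laplacian Ψ x := by
    unfold laplacian
    rw [Finset.sum_congr rfl fun i _ => hsum i, Finset.sum_add_distrib, Finset.sum_add_distrib,
      ← Finset.sum_mul, ← Finset.mul_sum, ← Finset.mul_sum, ← Finset.mul_sum]
  have hΨl : laplacian Ψ x = V x * Ψ x - E₀ * Ψ x := by linarith [heig x]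
  rw [hlap, hΨl]
  ring

end AEEaux

/-- **Approximate eigenfunction estimate** (Lemma 3.2).
Let `Ψ` be a bounded `C²` solution of `−ΔΨ + VΨ = E₀Ψ` with
`0 < Ψ₋ ≤ Ψ ≤ Ψ₊` and `‖∇Ψ‖ ≤ G`, and let `χ` be a smooth cut-off function,
`χ = 1` on `[−1/2,1/2]^d`, `supp χ ⊆ (−1,1)^d`, values in `[0,1]`.
For `L ≥ 1` set `χ_L(y) := χ(y/L)`.  Then there is a constant `C ≥ 0`,
depending only on `d`, `Ψ₋`, `Ψ₊`, `G`, and `χ`, such that for every `L ≥ 1`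
`‖−Δ(χ_L Ψ) + (V − E₀) χ_L Ψ‖_{L²} ≤ C L⁻¹ ‖χ_L Ψ‖_{L²}`. -/
theorem approximate_eigenfunction_estimate
    (d : ℕ) (hd : 1 ≤ d)
    (Ψm Ψp G : ℝ) (hΨm : 0 < Ψm) (hΨmp : Ψm ≤ Ψp) (hG : 0 ≤ G)
    (χ : EuclideanSpace ℝ (Fin d) → ℝ) (hχ : ContDiff ℝ (⊤ : ℕ∞) χ)
    (hχ01 : ∀ x, χ x ∈ Set.Icc (0 : ℝ) 1)
    (hχ1 : ∀ x : EuclideanSpace ℝ (Fin d), (∀ i, |x i| ≤ 1 / 2) → χ x = 1)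
    (hχsupp : ∀ x : EuclideanSpace ℝ (Fin d), χ x ≠ 0 → ∀ i, |x i| < 1) :
    ∃ C : ℝ, 0 ≤ C ∧
      ∀ (V : EuclideanSpace ℝ (Fin d) → ℝ), Continuous V → ∀ (E₀ : ℝ)
        (Ψ : EuclideanSpace ℝ (Fin d) → ℝ), ContDiff ℝ 2 Ψ →
        (∀ x, -laplacian Ψ x + V x * Ψ x = E₀ * Ψ x) →
        (∀ x, Ψm ≤ Ψ x ∧ Ψ x ≤ Ψp) →
        (∀ x, ‖gradient Ψ x‖ ≤ G) →
        ∀ L : ℝ, 1 ≤ L →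
          Real.sqrt (∫ x,
              (-laplacian (fun y => χ (L⁻¹ • y) * Ψ y) x
                + (V x - E₀) * (χ (L⁻¹ • x) * Ψ x)) ^ 2)
            ≤ C * L⁻¹ * Real.sqrt (∫ x, (χ (L⁻¹ • x) * Ψ x) ^ 2) := by
  classical
  have hχ2 : ContDiff ℝ 2 χ := hχ.of_le (WithTop.coe_le_coe.mpr le_top)
  -- compact support of χ
  have htsupp : tsupport χ ⊆ {x : EuclideanSpace ℝ (Fin d) | ∀ i, |x i| ≤ 1} :=
    closure_minimal (fun x hx i => (hχsupp x hx i).le) (AEEaux.isClosed_box 1)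
  have hχcs : HasCompactSupport χ :=
    IsCompact.of_isClosed_subset (AEEaux.isCompact_box 1) (isClosed_tsupport χ) htsupp
  -- bound on the first derivative of χ
  obtain ⟨K1, hK1⟩ := (hχcs.fderiv ℝ).exists_bound_of_continuous (hχ.continuous_fderiv (by simp))
  -- bounds on the second derivatives of χ
  have hK2e : ∀ i : Fin d, ∃ K, ∀ z,
      ‖fderiv ℝ (fun y => fderiv ℝ χ y (EuclideanSpace.single i 1)) z‖ ≤ K := by
    intro i
    have hg : ContDiff ℝ (⊤ : ℕ∞) (fun y => fderiv ℝ χ y (EuclideanSpace.single i 1)) :=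
      (hχ.fderiv_right (by simp)).clm_apply contDiff_const
    have hgcs : HasCompactSupport (fun y => fderiv ℝ χ y (EuclideanSpace.single i 1)) :=
      hχcs.fderiv_apply ℝ (EuclideanSpace.single i 1)
    exact (hgcs.fderiv ℝ).exists_bound_of_continuous (hg.continuous_fderiv (by simp))
  choose K2 hK2 using hK2e
  have hΨp0 : 0 ≤ Ψp := le_trans hΨm.le hΨmp
  set K1' := max K1 0 with hK1'def
  set M := (∑ i : Fin d, max (K2 i) 0) * Ψp + 2 * d * K1' * G with hMdef
  have hM0 : 0 ≤ M := by
    apply add_nonneg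
    · exact mul_nonneg (Finset.sum_nonneg fun i _ => le_max_right _ _) hΨp0
    · have : (0:ℝ) ≤ K1' := le_max_right _ _
      positivity
  refine ⟨M * Real.sqrt (2 ^ d) / Ψm,
    div_nonneg (mul_nonneg hM0 (Real.sqrt_nonneg _)) hΨm.le, ?_⟩
  intro V hV E₀ Ψ hΨ heig hbound hgrad L hL
  have hL0 : 0 < L := lt_of_lt_of_le one_pos hL
  set c := L⁻¹ with hc
  have hc0 : 0 < c := inv_pos.2 hL0
  have hc1 : c ≤ 1 := by rw [hc]; exact inv_le_one_of_one_le₀ hL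
  have hcL : c * L = 1 := inv_mul_cancel₀ hL0.ne'
  set F : EuclideanSpace ℝ (Fin d) → ℝ := fun x =>
    (∑ i, c ^ 2 * fderiv ℝ (fun y => fderiv ℝ χ y (EuclideanSpace.single i 1)) (c • x)
        (EuclideanSpace.single i 1)) * Ψ x
      + 2 * ∑ i, (c * fderiv ℝ χ (c • x) (EuclideanSpace.single i 1))
          * fderiv ℝ Ψ x (EuclideanSpace.single i 1) with hFdef
  -- pointwise identity
  have hId : ∀ x, -laplacian (fun y => χ (c • y) * Ψ y) x
      + (V x - E₀) * (χ (c • x) * Ψ x) = -F x :=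
    fun x => AEEaux.key_identity hχ hΨ heig c x
  -- pointwise bound
  have hFb : ∀ x, |F x| ≤ c * M := by
    intro x
    have hΨx : |Ψ x| ≤ Ψp := by
      rw [abs_of_pos (lt_of_lt_of_le hΨm (hbound x).1)]
      exact (hbound x).2
    have hterm1 : ∀ i : Fin d,
        |c ^ 2 * fderiv ℝ (fun y => fderiv ℝ χ y (EuclideanSpace.single i 1)) (c • x)
          (EuclideanSpace.single i 1)| ≤ c * max (K2 i) 0 := by
      intro i
      rw [abs_mul, abs_of_pos (pow_pos hc0 2)]
      have h1 : |fderiv ℝ (fun y => fderiv ℝ χ y (EuclideanSpace.single i 1)) (c • x)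
          (EuclideanSpace.single i 1)| ≤ max (K2 i) 0 := by
        rw [← Real.norm_eq_abs]
        calc ‖fderiv ℝ (fun y => fderiv ℝ χ y (EuclideanSpace.single i 1)) (c • x)
              (EuclideanSpace.single i 1)‖
            ≤ ‖fderiv ℝ (fun y => fderiv ℝ χ y (EuclideanSpace.single i 1)) (c • x)‖
              * ‖EuclideanSpace.single i (1:ℝ)‖ := ContinuousLinearMap.le_opNorm _ _
          _ ≤ K2 i * 1 := by
              rw [EuclideanSpace.norm_single, norm_one]
              exact mul_le_mul_of_nonneg_right (hK2 i _) zero_le_one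
          _ ≤ max (K2 i) 0 := by rw [mul_one]; exact le_max_left _ _
      calc c ^ 2 * |_| ≤ c ^ 2 * max (K2 i) 0 :=
            mul_le_mul_of_nonneg_left h1 (pow_pos hc0 2).le
        _ ≤ c * max (K2 i) 0 := by
            apply mul_le_mul_of_nonneg_right _ (le_max_right _ _)
            calc c ^ 2 = c * c := sq c
              _ ≤ c * 1 := mul_le_mul_of_nonneg_left hc1 hc0.le
              _ = c := mul_one c
    have hterm2 : ∀ i : Fin d,
        |(c * fderiv ℝ χ (c • x) (EuclideanSpace.single i 1))
          * fderiv ℝ Ψ x (EuclideanSpace.single i 1)| ≤ c * K1' * G := by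
      intro i
      rw [abs_mul, abs_mul, abs_of_pos hc0]
      have h1 : |fderiv ℝ χ (c • x) (EuclideanSpace.single i 1)| ≤ K1' := by
        rw [← Real.norm_eq_abs]
        calc ‖fderiv ℝ χ (c • x) (EuclideanSpace.single i 1)‖
            ≤ ‖fderiv ℝ χ (c • x)‖ * ‖EuclideanSpace.single i (1:ℝ)‖ :=
              ContinuousLinearMap.le_opNorm _ _
          _ ≤ K1 * 1 := by
              rw [EuclideanSpace.norm_single, norm_one]
              exact mul_le_mul_of_nonneg_right (hK1 _) zero_le_one
          _ ≤ K1' := by rw [mul_one]; exact le_max_left _ _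
      have h2 : |fderiv ℝ Ψ x (EuclideanSpace.single i 1)| ≤ G := by
        calc |fderiv ℝ Ψ x (EuclideanSpace.single i 1)|
            ≤ ‖gradient Ψ x‖ * ‖EuclideanSpace.single i (1:ℝ)‖ := AEEaux.pd_le_grad x _
          _ = ‖gradient Ψ x‖ := by rw [EuclideanSpace.norm_single, norm_one, mul_one]
          _ ≤ G := hgrad x
      calc c * |fderiv ℝ χ (c • x) (EuclideanSpace.single i 1)|
            * |fderiv ℝ Ψ x (EuclideanSpace.single i 1)|
          ≤ c * K1' * |fderiv ℝ Ψ x (EuclideanSpace.single i 1)| := by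
            apply mul_le_mul_of_nonneg_right _ (abs_nonneg _)
            exact mul_le_mul_of_nonneg_left h1 hc0.le
        _ ≤ c * K1' * G := by
            apply mul_le_mul_of_nonneg_left h2
            exact mul_nonneg hc0.le (le_trans (abs_nonneg _) h1)
    calc |F x| ≤ |(∑ i, c ^ 2 * fderiv ℝ (fun y => fderiv ℝ χ y (EuclideanSpace.single i 1))
            (c • x) (EuclideanSpace.single i 1))| * |Ψ x|
          + 2 * |∑ i, (c * fderiv ℝ χ (c • x) (EuclideanSpace.single i 1))
            * fderiv ℝ Ψ x (EuclideanSpace.single i 1)| := by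
          rw [hFdef]
          refine le_trans (abs_add_le _ _) ?_
          rw [abs_mul, abs_mul, abs_of_nonneg (by norm_num : (0:ℝ) ≤ 2)]
      _ ≤ (∑ i : Fin d, c * max (K2 i) 0) * Ψp + 2 * ∑ _i : Fin d, c * K1' * G := by
          apply add_le_add
          · apply mul_le_mul (le_trans (Finset.abs_sum_le_sum_abs _ _)
              (Finset.sum_le_sum fun i _ => hterm1 i)) hΨx (abs_nonneg _)
            exact Finset.sum_nonneg fun i _ =>
              mul_nonneg hc0.le (le_max_right _ _)
          · apply mul_le_mul_of_nonneg_left _ (by norm_num : (0:ℝ) ≤ 2)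
            exact le_trans (Finset.abs_sum_le_sum_abs _ _)
              (Finset.sum_le_sum fun i _ => hterm2 i)
      _ = c * M := by
          rw [hMdef, ← Finset.mul_sum, Finset.sum_const, Finset.card_univ,
            Fintype.card_fin, nsmul_eq_mul]
          ring
  -- F is supported in the box of radius L
  have hsmulco : ∀ (x : EuclideanSpace ℝ (Fin d)) (j : Fin d), (c • x) j = c * x j :=
    fun x j => rfl
  have hFsupp : ∀ x : EuclideanSpace ℝ (Fin d), ¬ (∀ i, |x i| ≤ L) → F x = 0 := by
    intro x hx
    push_neg at hx
    obtain ⟨j, hj⟩ := hx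
    have hfar : 1 < |(c • x) j| := by
      rw [hsmulco x j, abs_mul, abs_of_pos hc0, ← hcL]
      exact mul_lt_mul_of_pos_left hj hc0
    have h1 : fderiv ℝ χ (c • x) = 0 := AEEaux.fderiv_zero_of_far hχsupp j hfar
    have h2 : ∀ i : Fin d, fderiv ℝ (fun y => fderiv ℝ χ y (EuclideanSpace.single i 1))
        (c • x) = 0 := fun i => AEEaux.fderiv2_zero_of_far hχsupp j hfar _
    rw [hFdef]
    simp only [h1, fun i => h2 i, ContinuousLinearMap.zero_apply, mul_zero, zero_mul,
      Finset.sum_const_zero, add_zero, zero_add]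
  -- continuity of F
  have hFcont : Continuous F := by
    rw [hFdef]
    have hsmulcont : Continuous (fun x : EuclideanSpace ℝ (Fin d) => c • x) :=
      continuous_const_smul c
    apply Continuous.add
    · apply Continuous.mul _ hΨ.continuous
      apply continuous_finset_sum
      intro i _
      apply Continuous.mul continuous_const
      have hg : ContDiff ℝ 2 (fun y => fderiv ℝ χ y (EuclideanSpace.single i 1)) :=
        ((hχ.fderiv_right (m := ((⊤ : ℕ∞) : WithTop ℕ∞)) (by simp)).clm_apply contDiff_const).of_le (WithTop.coe_le_coe.mpr le_top)
      exact ((AEEaux.contDiff_pd hg (EuclideanSpace.single i 1)).continuous).comp hsmulcont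
    · apply Continuous.mul continuous_const
      apply continuous_finset_sum
      intro i _
      have hg : ContDiff ℝ 1 (fun y => fderiv ℝ χ y (EuclideanSpace.single i 1)) :=
        AEEaux.contDiff_pd hχ2 (EuclideanSpace.single i 1)
      exact (continuous_const.mul (hg.continuous.comp hsmulcont)).mul
        (AEEaux.contDiff_pd hΨ (EuclideanSpace.single i 1)).continuous
  -- rewrite the integrand on the left
  have hgoalfun : (fun x => (-laplacian (fun y => χ (c • y) * Ψ y) x
      + (V x - E₀) * (χ (c • x) * Ψ x)) ^ 2) = fun x => F x ^ 2 := by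
    funext x
    rw [hId x]
    ring
  rw [hgoalfun]
  -- upper bound for the left-hand integral
  have hvolL : volume {x : EuclideanSpace ℝ (Fin d) | ∀ i, |x i| ≤ L}
      = ENNReal.ofReal (2 * L) ^ d := AEEaux.volume_box L
  have hvolLlt : volume {x : EuclideanSpace ℝ (Fin d) | ∀ i, |x i| ≤ L} < ⊤ := by
    rw [hvolL]
    exact ENNReal.pow_lt_top ENNReal.ofReal_lt_top
  have hLHS : ∫ x, F x ^ 2 ≤ (c * M) ^ 2 * (2 ^ d * L ^ d) := by
    have hzero : ∀ x ∉ {x : EuclideanSpace ℝ (Fin d) | ∀ i, |x i| ≤ L}, F x ^ 2 = 0 := by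
      intro x hx
      rw [hFsupp x hx]
      ring
    rw [← MeasureTheory.setIntegral_eq_integral_of_forall_compl_eq_zero hzero]
    have hb := norm_setIntegral_le_of_norm_le_const (f := fun x => F x ^ 2)
      (C := (c * M) ^ 2) hvolLlt ?_
    · calc ∫ x in {x : EuclideanSpace ℝ (Fin d) | ∀ i, |x i| ≤ L}, F x ^ 2
          ≤ ‖∫ x in {x : EuclideanSpace ℝ (Fin d) | ∀ i, |x i| ≤ L}, F x ^ 2‖ :=
            le_abs_self _
        _ ≤ (c * M) ^ 2 * (volume {x : EuclideanSpace ℝ (Fin d) | ∀ i, |x i| ≤ L}).toReal :=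
            hb
        _ = (c * M) ^ 2 * (2 ^ d * L ^ d) := by
            rw [hvolL, ENNReal.toReal_pow, ENNReal.toReal_ofReal (by positivity)]
            ring
    · intro x _
      show ‖F x ^ 2‖ ≤ (c * M) ^ 2
      rw [Real.norm_eq_abs, abs_of_nonneg (sq_nonneg _)]
      calc F x ^ 2 = |F x| ^ 2 := (sq_abs _).symm
        _ ≤ (c * M) ^ 2 := pow_le_pow_left₀ (abs_nonneg _) (hFb x) 2
  -- lower bound for the right-hand integral
  have hhcont : Continuous (fun x : EuclideanSpace ℝ (Fin d) => (χ (c • x) * Ψ x) ^ 2) :=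
    ((hχ.continuous.comp (continuous_const_smul c)).mul hΨ.continuous).pow 2
  have hhsupp : Function.support (fun x : EuclideanSpace ℝ (Fin d) => (χ (c • x) * Ψ x) ^ 2)
      ⊆ {x : EuclideanSpace ℝ (Fin d) | ∀ i, |x i| ≤ L} := by
    intro x hx i
    have hχx : χ (c • x) ≠ 0 := by
      intro h0
      apply hx
      show (χ (c • x) * Ψ x) ^ 2 = 0
      rw [h0]
      ring
    have h1 := hχsupp _ hχx i
    rw [hsmulco x i, abs_mul, abs_of_pos hc0, ← hcL] at h1
    exact ((mul_lt_mul_iff_right₀ hc0).mp h1).le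
  have hhcs : HasCompactSupport (fun x : EuclideanSpace ℝ (Fin d) => (χ (c • x) * Ψ x) ^ 2) :=
    IsCompact.of_isClosed_subset (AEEaux.isCompact_box L) (isClosed_tsupport _)
      (closure_minimal hhsupp (AEEaux.isClosed_box L))
  have hhint : Integrable (fun x : EuclideanSpace ℝ (Fin d) => (χ (c • x) * Ψ x) ^ 2) :=
    hhcont.integrable_of_hasCompactSupport hhcs
  have hvolL2 : (volume {x : EuclideanSpace ℝ (Fin d) | ∀ i, |x i| ≤ L / 2}).toReal
      = L ^ d := by
    rw [AEEaux.volume_box (L / 2), ENNReal.toReal_pow, ENNReal.toReal_ofReal (by positivity)]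
    ring_nf
  have hRHS : Ψm ^ 2 * L ^ d ≤ ∫ x, (χ (c • x) * Ψ x) ^ 2 := by
    have hptw : ∀ x ∈ {x : EuclideanSpace ℝ (Fin d) | ∀ i, |x i| ≤ L / 2},
        Ψm ^ 2 ≤ (χ (c • x) * Ψ x) ^ 2 := by
      intro x hx
      have hχ1x : χ (c • x) = 1 := by
        apply hχ1
        intro i
        rw [hsmulco x i, abs_mul, abs_of_pos hc0]
        calc c * |x i| ≤ c * (L / 2) := mul_le_mul_of_nonneg_left (hx i) hc0.le
          _ = 1 / 2 := by rw [show c * (L / 2) = c * L / 2 by ring, hcL]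
      rw [hχ1x, one_mul]
      exact pow_le_pow_left₀ hΨm.le (hbound x).1 2
    calc Ψm ^ 2 * L ^ d
        = Ψm ^ 2 * (volume {x : EuclideanSpace ℝ (Fin d) | ∀ i, |x i| ≤ L / 2}).toReal := by
          rw [hvolL2]
      _ ≤ ∫ x in {x : EuclideanSpace ℝ (Fin d) | ∀ i, |x i| ≤ L / 2}, (χ (c • x) * Ψ x) ^ 2 :=
          by
          have h := setIntegral_ge_of_const_le (AEEaux.isClosed_box (L / 2)).measurableSet
            (by rw [AEEaux.volume_box (L / 2)]
                exact (ENNReal.pow_lt_top ENNReal.ofReal_lt_top).ne)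
            hptw hhint.integrableOn
          rw [smul_eq_mul, mul_comm] at h
          exact h
      _ ≤ ∫ x, (χ (c • x) * Ψ x) ^ 2 :=
          setIntegral_le_integral hhint (Filter.Eventually.of_forall fun x => sq_nonneg _)
  -- final chain
  calc Real.sqrt (∫ x, F x ^ 2)
      ≤ Real.sqrt ((c * M) ^ 2 * (2 ^ d * L ^ d)) := Real.sqrt_le_sqrt hLHS
    _ = c * M * (Real.sqrt (2 ^ d) * Real.sqrt (L ^ d)) := by
        rw [Real.sqrt_mul (sq_nonneg _), Real.sqrt_sq (by positivity : (0:ℝ) ≤ c * M),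
          Real.sqrt_mul (by positivity : (0:ℝ) ≤ (2:ℝ) ^ d)]
    _ = M * Real.sqrt (2 ^ d) / Ψm * c * (Ψm * Real.sqrt (L ^ d)) := by
        field_simp
    _ = M * Real.sqrt (2 ^ d) / Ψm * c * Real.sqrt (Ψm ^ 2 * L ^ d) := by
        rw [Real.sqrt_mul (sq_nonneg _), Real.sqrt_sq hΨm.le]
    _ ≤ M * Real.sqrt (2 ^ d) / Ψm * c * Real.sqrt (∫ x, (χ (c • x) * Ψ x) ^ 2) := by
        apply mul_le_mul_of_nonneg_left (Real.sqrt_le_sqrt hRHS)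
        have h1 : (0:ℝ) ≤ M * Real.sqrt (2 ^ d) / Ψm :=
          div_nonneg (mul_nonneg hM0 (Real.sqrt_nonneg _)) hΨm.le
        positivity
end
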